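/- arXiv:2308.13776 — 4 statements merged into one kernel-verified Lean document; each statement's English description precedes it below -/
import Mathlib

section
/- If x̄ is a stationary point of F, i.e. 0 ∈ ∇f(x̄) + ∂g(x̄), then for every γ > 0 and every self-adjoint positive definite linear operator 𝒟 on 𝕏 one has ∇F_{γ,𝒟}(x̄) = 0 and F_{γ,𝒟}(x̄) = F(x̄). -/
open Set Filter
open scoped RealInnerProductSpace ENNReal

noncomputable section

attribute [local instance] Classical.propDecidable

variable {X : Type*} [NormedAddCommGroup X] [InnerProductSpace ℝ X] [FiniteDimensional ℝ X]

/-- `g` extended by `+∞` outside its domain `s`. -/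
def extE (g : X → ℝ) (s : Set X) (x : X) : EReal := if x ∈ s then (g x : EReal) else ⊤

/-- The objective `F = f + g`, extended-real valued. -/
def FE (f g : X → ℝ) (s : Set X) (x : X) : EReal := (f x : EReal) + extE g s x

/-- `φ_{γ,D}(x) = (1/(2γ)) ⟪ x, D x ⟫ - f x`. -/
def phiGD (γ : ℝ) (D : X →L[ℝ] X) (f : X → ℝ) (x : X) : ℝ :=
  (1 / (2 * γ)) * ⟪x, D x⟫ - f x

/-- `∇φ_{γ,D}(x) = γ⁻¹ D x - ∇f x`. -/
def phiGDgrad (γ : ℝ) (D : X →L[ℝ] X) (fgrad : X → X) (x : X) : X :=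
  (1 / γ) • D x - fgrad x

/-- Bregman function `B_{γ,D}(y, x)`, equal to `+∞` when `x ∉ cl (dom g)`. -/
def BregE (γ : ℝ) (D : X →L[ℝ] X) (f : X → ℝ) (fgrad : X → X) (s : Set X)
    (y x : X) : EReal :=
  if x ∈ closure s then
    ((phiGD γ D f y - phiGD γ D f x - ⟪phiGDgrad γ D fgrad x, y - x⟫ : ℝ) : EReal)
  else ⊤

/-- `G_{γ,D}(x, y) = F(y) + B_{γ,D}(y, x)`. -/
def GE (γ : ℝ) (D : X →L[ℝ] X) (f : X → ℝ) (fgrad : X → X) (g : X → ℝ) (s : Set X)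
    (x y : X) : EReal := FE f g s y + BregE γ D f fgrad s y x

/-- The forward-backward envelope `F_{γ,D}(x) = inf_y G_{γ,D}(x, y)`. -/
def FBenvE (γ : ℝ) (D : X →L[ℝ] X) (f : X → ℝ) (fgrad : X → X) (g : X → ℝ) (s : Set X)
    (x : X) : EReal := ⨅ y : X, GE γ D f fgrad g s x y

/-- The convex subdifferential of (the extension by `+∞` of) `g` at `x`. -/
def SubdiffAt (g : X → ℝ) (s : Set X) (x : X) : Set X :=
  {v : X | x ∈ s ∧ ∀ z ∈ s, g x + ⟪v, z - x⟫ ≤ g z}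

/-- `x` is a stationary point of `F = f + g`, i.e. `0 ∈ ∇f(x) + ∂g(x)`. -/
def IsStationaryFB (fgrad : X → X) (g : X → ℝ) (s : Set X) (x : X) : Prop :=
  -fgrad x ∈ SubdiffAt g s x

open Topology

/-!
At a stationary point `x̄` the subgradient inequality `g y ≥ g x̄ - ⟪∇f x̄, y - x̄⟫` and `B ≥ 0`
show that `y = x̄` minimises `G(x̄, ·)`, so `F_{γ,D}(x̄) = F(x̄)`. For `x` near `x̄` the envelope
is squeezed between `F(x̄) ± C ‖x - x̄‖²`: from above by testing `y = x̄` in `G(x, ·)`, from below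
by the same subgradient inequality, where the cross term `⟪∇f x - ∇f x̄, y - x⟫` is absorbed by the
coercivity of `D` because `∇f` is locally Lipschitz. A quadratic squeeze forces a zero gradient.
-/

section Smooth

variable {E : Type*} [NormedAddCommGroup E] [InnerProductSpace ℝ E] [CompleteSpace E]
  {f : E → ℝ} {fgrad : E → E} {s : Set E} {x z : E}

theorem exists_lipschitzOnWith_of_hasGradientAt_of_contDiffOn (hs : IsOpen s)
    (hf : ContDiffOn ℝ 2 f s) (hgrad : ∀ z ∈ s, HasGradientAt f (fgrad z) z) (hx : x ∈ s) :
    ∃ K, ∃ t ∈ 𝓝 x, LipschitzOnWith K fgrad t := by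
  have hxs : s ∈ 𝓝 x := hs.mem_nhds hx
  obtain ⟨K, t, ht, hlip⟩ :=
    ((hf.fderiv_of_isOpen hs (m := 1) (by norm_num)).contDiffAt hxs).exists_lipschitzOnWith
  refine ⟨K, t ∩ s, inter_mem ht hxs, lipschitzOnWith_iff_norm_sub_le.2 fun z hz w hw => ?_⟩
  have hfderiv : ∀ y ∈ s, fderiv ℝ f y = InnerProductSpace.toDual ℝ E (fgrad y) :=
    fun y hy => (hgrad y hy).hasFDerivAt.fderiv
  have := lipschitzOnWith_iff_norm_sub_le.1 hlip hz.1 hw.1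
  rwa [hfderiv z hz.2, hfderiv w hw.2, ← map_sub, LinearIsometryEquiv.norm_map] at this

theorem abs_sub_sub_inner_le_of_lipschitzOnWith (hs : Convex ℝ s)
    (hgrad : ∀ y ∈ s, HasGradientAt f (fgrad y) y) {K : NNReal}
    (hlip : LipschitzOnWith K fgrad s) (hx : x ∈ s) (hz : z ∈ s) :
    |f z - f x - ⟪fgrad x, z - x⟫| ≤ K * ‖z - x‖ ^ 2 := by
  set t := s ∩ Metric.closedBall x ‖z - x‖
  have hbound : ∀ y ∈ t, ‖InnerProductSpace.toDual ℝ E (fgrad y)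
      - InnerProductSpace.toDual ℝ E (fgrad x)‖ ≤ K * ‖z - x‖ := fun y hy => by
    rw [← map_sub, LinearIsometryEquiv.norm_map]
    calc ‖fgrad y - fgrad x‖ ≤ K * ‖y - x‖ := lipschitzOnWith_iff_norm_sub_le.1 hlip hy.1 hx
      _ ≤ K * ‖z - x‖ := by gcongr; simpa [dist_eq_norm] using hy.2
  have := Convex.norm_image_sub_le_of_norm_hasFDerivWithin_le'
    (fun y hy => (hgrad y hy.1).hasFDerivAt.hasFDerivWithinAt) hbound
    (hs.inter (convex_closedBall _ _)) ⟨hx, Metric.mem_closedBall_self (norm_nonneg _)⟩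
    ⟨hz, by simp [dist_eq_norm]⟩
  rw [InnerProductSpace.toDual_apply_apply, Real.norm_eq_abs] at this
  linarith

end Smooth

theorem exists_pos_mul_norm_sq_le_inner_self_apply {E : Type*} [NormedAddCommGroup E]
    [InnerProductSpace ℝ E] [FiniteDimensional ℝ E] (D : E →L[ℝ] E)
    (hD : ∀ u : E, u ≠ 0 → 0 < ⟪u, D u⟫) : ∃ m : ℝ, 0 < m ∧ ∀ u : E, m * ‖u‖ ^ 2 ≤ ⟪u, D u⟫ := by
  rcases subsingleton_or_nontrivial E with hE | hE
  · exact ⟨1, one_pos, fun u => by simp [Subsingleton.elim u 0]⟩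
  have hcont : Continuous fun u : E => ⟪u, D u⟫ := by fun_prop
  obtain ⟨u₀, hu₀, hmin⟩ := (isCompact_sphere (0 : E) 1).exists_isMinOn
    (NormedSpace.sphere_nonempty.2 zero_le_one) hcont.continuousOn
  have hu₀ : ‖u₀‖ = 1 := by simpa using hu₀
  refine ⟨⟪u₀, D u₀⟫, hD u₀ (norm_ne_zero_iff.1 (by simp [hu₀])), fun u => ?_⟩
  rcases eq_or_ne u 0 with rfl | hu
  · simp
  have hnorm : ‖u‖ ≠ 0 := norm_ne_zero_iff.2 hu
  have hv : ‖u‖⁻¹ • u ∈ Metric.sphere (0 : E) 1 := by simp [norm_smul, hnorm]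
  have hscale : ⟪u, D u⟫ = ‖u‖ ^ 2 * ⟪‖u‖⁻¹ • u, D (‖u‖⁻¹ • u)⟫ := by
    rw [map_smul, real_inner_smul_left, real_inner_smul_right]
    field_simp
  rw [hscale, mul_comm]
  exact mul_le_mul_of_nonneg_left (hmin hv) (sq_nonneg _)

theorem hasFDerivWithinAt_zero_of_isBigO_norm_sq {𝕜 E F : Type*} [NontriviallyNormedField 𝕜]
    [NormedAddCommGroup E] [NormedSpace 𝕜 E] [NormedAddCommGroup F] [NormedSpace 𝕜 F]
    {φ : E → F} {s : Set E} {x : E}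
    (h : (fun z => φ z - φ x) =O[𝓝[s] x] fun z => ‖z - x‖ ^ 2) :
    HasFDerivWithinAt φ (0 : E →L[𝕜] F) s x := by
  refine .of_isLittleO ?_
  simp only [zero_apply, sub_zero]
  exact h.trans_isLittleO ((Asymptotics.isLittleO_norm_pow_id one_lt_two).comp_tendsto
    (tendsto_sub_nhds_zero_iff.2 nhdsWithin_le_nhds))

theorem FE_of_mem {α : Type*} {f g : α → ℝ} {s : Set α} {x : α} (hx : x ∈ s) :
    FE f g s x = ((f x + g x : ℝ) : EReal) := by
  rw [FE, extE, if_pos hx, EReal.coe_add]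

section Envelope

variable {E : Type*} [NormedAddCommGroup E] [InnerProductSpace ℝ E]
  {γ : ℝ} {D : E →L[ℝ] E} {f g : E → ℝ} {fgrad : E → E} {s : Set E} {x y z : E}

theorem bregE_of_mem_closure (hD : ∀ u v : E, ⟪D u, v⟫ = ⟪u, D v⟫) (hx : x ∈ closure s) :
    BregE γ D f fgrad s y x =
      ((f x - f y + ⟪fgrad x, y - x⟫ + 1 / (2 * γ) * ⟪y - x, D (y - x)⟫ : ℝ) : EReal) := by
  have hDx : ⟪D x, y⟫ = ⟪x, D y⟫ := hD x y
  have hDx' : ⟪y, D x⟫ = ⟪x, D y⟫ := by rw [real_inner_comm, hDx]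
  rw [BregE, if_pos hx]
  congr 1
  simp only [phiGD, phiGDgrad, map_sub, inner_sub_left, inner_sub_right, real_inner_smul_left,
    hDx, hDx', hD x x]
  ring

theorem GE_of_mem (hD : ∀ u v : E, ⟪D u, v⟫ = ⟪u, D v⟫) (hx : x ∈ closure s) (hy : y ∈ s) :
    GE γ D f fgrad g s x y =
      ((g y + f x + ⟪fgrad x, y - x⟫ + 1 / (2 * γ) * ⟪y - x, D (y - x)⟫ : ℝ) : EReal) := by
  rw [GE, FE, extE, if_pos hy, bregE_of_mem_closure hD hx, ← EReal.coe_add, ← EReal.coe_add]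
  congr 1
  ring

theorem GE_of_notMem (hx : x ∈ closure s) (hy : y ∉ s) : GE γ D f fgrad g s x y = ⊤ := by
  rw [GE, FE, extE, if_neg hy, BregE, if_pos hx, EReal.coe_add_top, EReal.top_add_coe]

theorem FBenvE_le (hD : ∀ u v : E, ⟪D u, v⟫ = ⟪u, D v⟫) (hx : x ∈ closure s) (hy : y ∈ s) :
    FBenvE γ D f fgrad g s x ≤
      ((g y + f x + ⟪fgrad x, y - x⟫ + 1 / (2 * γ) * ⟪y - x, D (y - x)⟫ : ℝ) : EReal) :=
  GE_of_mem hD hx hy ▸ iInf_le _ y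

theorem le_FBenvE (hD : ∀ u v : E, ⟪D u, v⟫ = ⟪u, D v⟫) (hx : x ∈ closure s) {c : ℝ}
    (h : ∀ y ∈ s, c ≤ g y + f x + ⟪fgrad x, y - x⟫ + 1 / (2 * γ) * ⟪y - x, D (y - x)⟫) :
    (c : EReal) ≤ FBenvE γ D f fgrad g s x := by
  refine le_iInf fun y => ?_
  by_cases hy : y ∈ s
  · rw [GE_of_mem hD hx hy]
    exact EReal.coe_le_coe (h y hy)
  · rw [GE_of_notMem hx hy]
    exact le_top

theorem FBenvE_eq_FE_of_isStationaryFB (hγ : 0 ≤ γ) (hD : ∀ u v : E, ⟪D u, v⟫ = ⟪u, D v⟫)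
    (hDnonneg : ∀ u : E, 0 ≤ ⟪u, D u⟫) (hx : IsStationaryFB fgrad g s x) :
    FBenvE γ D f fgrad g s x = FE f g s x := by
  obtain ⟨hxs, hsub⟩ := hx
  rw [FE_of_mem hxs]
  refine le_antisymm ?_ (le_FBenvE hD (subset_closure hxs) fun y hy => ?_)
  · simpa [add_comm] using FBenvE_le (γ := γ) (D := D) (fgrad := fgrad) hD (subset_closure hxs) hxs
  · have hgy := hsub y hy
    rw [inner_neg_left] at hgy
    have hq : 0 ≤ 1 / (2 * γ) * ⟪y - x, D (y - x)⟫ := mul_nonneg (by positivity) (hDnonneg _)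
    linarith

theorem FBenvE_le_add_sq_of_taylor {K : ℝ} (hD : ∀ u v : E, ⟪D u, v⟫ = ⟪u, D v⟫) (hγ : 0 ≤ γ)
    (hxs : x ∈ s) (hz : z ∈ closure s)
    (hT : f z - f x - ⟪fgrad x, z - x⟫ ≤ K * ‖z - x‖ ^ 2)
    (hL : ‖fgrad z - fgrad x‖ ≤ K * ‖z - x‖) :
    FBenvE γ D f fgrad g s z ≤
      ((f x + g x + (2 * K + ‖D‖ / (2 * γ)) * ‖z - x‖ ^ 2 : ℝ) : EReal) := by
  refine (FBenvE_le hD hz hxs).trans (EReal.coe_le_coe ?_)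
  have hcs : ⟪fgrad x - fgrad z, z - x⟫ ≤ K * ‖z - x‖ ^ 2 := by
    calc ⟪fgrad x - fgrad z, z - x⟫ ≤ ‖fgrad x - fgrad z‖ * ‖z - x‖ := real_inner_le_norm _ _
      _ ≤ K * ‖z - x‖ * ‖z - x‖ := by rw [norm_sub_rev]; gcongr
      _ = K * ‖z - x‖ ^ 2 := by ring
  have hq : ⟪x - z, D (x - z)⟫ ≤ ‖D‖ * ‖z - x‖ ^ 2 := by
    calc ⟪x - z, D (x - z)⟫ ≤ ‖x - z‖ * ‖D (x - z)‖ := real_inner_le_norm _ _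
      _ ≤ ‖x - z‖ * (‖D‖ * ‖x - z‖) := by gcongr; exact D.le_opNorm _
      _ = ‖D‖ * ‖z - x‖ ^ 2 := by rw [norm_sub_rev]; ring
  have hsplit : ⟪fgrad z, x - z⟫ = ⟪fgrad x - fgrad z, z - x⟫ - ⟪fgrad x, z - x⟫ := by
    rw [← neg_sub z x, inner_neg_right, inner_sub_left]
    ring
  have hDq : 1 / (2 * γ) * ⟪x - z, D (x - z)⟫ ≤ ‖D‖ / (2 * γ) * ‖z - x‖ ^ 2 := by
    calc 1 / (2 * γ) * ⟪x - z, D (x - z)⟫ ≤ 1 / (2 * γ) * (‖D‖ * ‖z - x‖ ^ 2) := by gcongr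
      _ = ‖D‖ / (2 * γ) * ‖z - x‖ ^ 2 := by ring
  linarith

theorem sub_sq_le_FBenvE_of_taylor (hD : ∀ u v : E, ⟪D u, v⟫ = ⟪u, D v⟫) (hγ : 0 < γ)
    {K m : ℝ} (hm : 0 < m) (hcoer : ∀ u : E, m * ‖u‖ ^ 2 ≤ ⟪u, D u⟫)
    (hx : IsStationaryFB fgrad g s x) (hz : z ∈ closure s)
    (hT : -(K * ‖z - x‖ ^ 2) ≤ f z - f x - ⟪fgrad x, z - x⟫)
    (hL : ‖fgrad z - fgrad x‖ ≤ K * ‖z - x‖) :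
    ((f x + g x - (K + γ * K ^ 2 / (2 * m)) * ‖z - x‖ ^ 2 : ℝ) : EReal) ≤
      FBenvE γ D f fgrad g s z := by
  refine le_FBenvE hD hz fun y hy => ?_
  have hgy := hx.2 y hy
  rw [inner_neg_left] at hgy
  have hq : m / (2 * γ) * ‖y - z‖ ^ 2 ≤ 1 / (2 * γ) * ⟪y - z, D (y - z)⟫ := by
    calc m / (2 * γ) * ‖y - z‖ ^ 2 = 1 / (2 * γ) * (m * ‖y - z‖ ^ 2) := by ring
      _ ≤ 1 / (2 * γ) * ⟪y - z, D (y - z)⟫ := by gcongr; exact hcoer _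
  set a := m / (2 * γ)
  have ha : 0 < a := by positivity
  have hcs : -(K * ‖z - x‖ * ‖y - z‖) ≤ ⟪fgrad z - fgrad x, y - z⟫ := by
    have := (abs_le.1 (abs_real_inner_le_norm (fgrad z - fgrad x) (y - z))).1
    nlinarith [norm_nonneg (y - z)]
  -- AM-GM with `d = ‖z - x‖`, `t = ‖y - z‖`: `K d t ≤ a t² + K² d² / (4a) = a t² + γ K² d² / (2m)`
  have hamgm : K * ‖z - x‖ * ‖y - z‖ ≤ a * ‖y - z‖ ^ 2 + γ * K ^ 2 / (2 * m) * ‖z - x‖ ^ 2 := by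
    have hK : γ * K ^ 2 / (2 * m) = K ^ 2 / (4 * a) := by
      simp only [a]; field_simp; ring
    rw [hK, ← sub_nonneg]
    have : 0 ≤ (2 * a * ‖y - z‖ - K * ‖z - x‖) ^ 2 / (4 * a) := by positivity
    convert this using 1
    field_simp
    ring
  have hsplit : ⟪fgrad z, y - z⟫ =
      ⟪fgrad z - fgrad x, y - z⟫ + ⟪fgrad x, y - x⟫ - ⟪fgrad x, z - x⟫ := by
    simp only [inner_sub_left, inner_sub_right]
    ring
  linarith

theorem abs_sub_le_of_coe_eq_FBenvE {K m φ : ℝ} (hD : ∀ u v : E, ⟪D u, v⟫ = ⟪u, D v⟫)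
    (hγ : 0 < γ) (hm : 0 < m) (hcoer : ∀ u : E, m * ‖u‖ ^ 2 ≤ ⟪u, D u⟫)
    (hx : IsStationaryFB fgrad g s x) (hz : z ∈ closure s)
    (hφ : (φ : EReal) = FBenvE γ D f fgrad g s z) (hK : 0 ≤ K)
    (hT : |f z - f x - ⟪fgrad x, z - x⟫| ≤ K * ‖z - x‖ ^ 2)
    (hL : ‖fgrad z - fgrad x‖ ≤ K * ‖z - x‖) :
    |φ - (f x + g x)| ≤ (3 * K + ‖D‖ / (2 * γ) + γ * K ^ 2 / (2 * m)) * ‖z - x‖ ^ 2 := by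
  have hup := FBenvE_le_add_sq_of_taylor (g := g) hD hγ.le hx.1 hz (abs_le.1 hT).2 hL
  have hlo := sub_sq_le_FBenvE_of_taylor hD hγ hm hcoer hx hz (abs_le.1 hT).1 hL
  rw [← hφ, EReal.coe_le_coe_iff] at hup hlo
  have hA : 0 ≤ (2 * K + ‖D‖ / (2 * γ)) * ‖z - x‖ ^ 2 := by positivity
  have hB : 0 ≤ (K + γ * K ^ 2 / (2 * m)) * ‖z - x‖ ^ 2 := by positivity
  rw [abs_le]
  constructor <;> linarith

end Envelope

theorem fbe_at_stationary_general
    (f g : X → ℝ) (domg O : Set X) (fgrad : X → X)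
    (hO : IsOpen O) (hclO : closure domg ⊆ O)
    (hfC2 : ContDiffOn ℝ 2 f O)
    (hfgrad : ∀ z ∈ O, HasGradientAt f (fgrad z) z)
    (xb : X) (hstat : IsStationaryFB fgrad g domg xb)
    (γ : ℝ) (hγ : 0 < γ) (D : X →L[ℝ] X)
    (hDsa : ∀ u v : X, ⟪D u, v⟫ = ⟪u, D v⟫)
    (hDpd : ∀ u : X, u ≠ 0 → 0 < ⟪u, D u⟫)
    :
    FBenvE γ D f fgrad g domg xb = FE f g domg xb ∧
    ∀ Fenv : X → ℝ, (∀ z ∈ closure domg, (Fenv z : EReal) = FBenvE γ D f fgrad g domg z) →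
      HasGradientWithinAt Fenv (0 : X) (closure domg) xb := by
  have hxb : xb ∈ closure domg := subset_closure hstat.1
  have hxbO : xb ∈ O := hclO hxb
  have henv : FBenvE γ D f fgrad g domg xb = FE f g domg xb :=
    FBenvE_eq_FE_of_isStationaryFB hγ.le hDsa
      (fun u => (eq_or_ne u 0).elim (fun hu => by simp [hu]) fun hu => (hDpd u hu).le) hstat
  refine ⟨henv, fun Fenv hFenv => ?_⟩
  have hFxb : Fenv xb = f xb + g xb := by
    have h := hFenv xb hxb
    rw [henv, FE_of_mem hstat.1] at h
    exact_mod_cast h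
  obtain ⟨K, t, ht, hlip⟩ :=
    exists_lipschitzOnWith_of_hasGradientAt_of_contDiffOn hO hfC2 hfgrad hxbO
  obtain ⟨r, hr, hball⟩ := Metric.mem_nhds_iff.1 (inter_mem ht (hO.mem_nhds hxbO))
  have hlip' : LipschitzOnWith K fgrad (Metric.ball xb r) := hlip.mono fun _ hz => (hball hz).1
  obtain ⟨m, hm, hcoer⟩ := exists_pos_mul_norm_sq_le_inner_self_apply D hDpd
  have hbound : ∀ᶠ z in 𝓝[closure domg] xb, ‖Fenv z - Fenv xb‖ ≤
      (3 * K + ‖D‖ / (2 * γ) + γ * K ^ 2 / (2 * m)) * ‖‖z - xb‖ ^ 2‖ := by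
    filter_upwards [self_mem_nhdsWithin, mem_nhdsWithin_of_mem_nhds (Metric.ball_mem_nhds xb hr)]
      with z hz hzr
    rw [hFxb, Real.norm_eq_abs, norm_pow, norm_norm]
    exact abs_sub_le_of_coe_eq_FBenvE hDsa hγ hm hcoer hstat hz (hFenv z hz) K.coe_nonneg
      (abs_sub_sub_inner_le_of_lipschitzOnWith (convex_ball xb r)
        (fun y hy => hfgrad y (hball hy).2) hlip'
        (Metric.mem_ball_self hr) hzr)
      (lipschitzOnWith_iff_norm_sub_le.1 hlip' hzr (Metric.mem_ball_self hr))
  simpa using (hasFDerivWithinAt_zero_of_isBigO_norm_sq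
    (Asymptotics.IsBigO.of_bound _ hbound)).hasGradientWithinAt

/-- at a stationary point `x̄` of `F`, `∇F_{γ,D}(x̄) = 0` and
`F_{γ,D}(x̄) = F(x̄)`. -/
theorem fbe_at_stationary
    (f g : X → ℝ) (domg O : Set X) (fgrad : X → X)
    (hdom : domg.Nonempty) (hO : IsOpen O) (hclO : closure domg ⊆ O)
    (hgconv : ConvexOn ℝ domg g) (hgcont : ContinuousOn g domg)
    (hglsc : LowerSemicontinuous (extE g domg))
    (hflsc : LowerSemicontinuous f)
    (hfC2 : ContDiffOn ℝ 2 f O)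
    (hfgrad : ∀ z ∈ O, HasGradientAt f (fgrad z) z)
    (hFlb : ∃ c : ℝ, ∀ z ∈ domg, c ≤ f z + g z)
    (xb : X) (hstat : IsStationaryFB fgrad g domg xb)
    (γ : ℝ) (hγ : 0 < γ) (D : X →L[ℝ] X)
    (hDsa : ∀ u v : X, ⟪D u, v⟫ = ⟪u, D v⟫)
    (hDpd : ∀ u : X, u ≠ 0 → 0 < ⟪u, D u⟫)
    :
    FBenvE γ D f fgrad g domg xb = FE f g domg xb ∧
    ∀ Fenv : X → ℝ, (∀ z ∈ closure domg, (Fenv z : EReal) = FBenvE γ D f fgrad g domg z) →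
      HasGradientWithinAt Fenv (0 : X) (closure domg) xb :=
  fbe_at_stationary_general f g domg O fgrad hO hclO hfC2 hfgrad xb hstat γ hγ D hDsa hDpd
end
end

section
/- Let γ > 0 and let 𝒟 be a self-adjoint positive definite linear operator on 𝕏. If x̄ ∈ cl(dom g) and F_{γ,𝒟}(x̄) = F(x̄), then prox^𝒟_{γg}(x̄ − γ𝒟^{−1}∇f(x̄)) = x̄; in particular x̄ ∈ dom g and 0 ∈ ∇f(x̄) + ∂g(x̄), i.e. x̄ is a stationary point of F. -/
/-! For `x̄ ∈ cl (dom g)` and `z ∈ dom g`,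
`G_{γ,D}(x̄, z) = f(x̄) + ⟪∇f(x̄), z - x̄⟫ + (1/(2γ)) ⟪z - x̄, D (z - x̄)⟫ + g(z)`,
so the hypothesis `F(x̄) = inf_z G_{γ,D}(x̄, z)` forces `x̄ ∈ dom g` and
`0 ≤ ⟪∇f(x̄), z - x̄⟫ + (1/(2γ)) ⟪z - x̄, D (z - x̄)⟫ + g(z) - g(x̄)`.
Applied along the segment from `x̄` to `z`, convexity of `g` lets the quadratic term vanish in the
limit, giving `-∇f(x̄) ∈ ∂g(x̄)`. The prox objective at `x̄ - γ D⁻¹ ∇f(x̄)` exceeds its value at `x̄`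
by exactly that expression, hence, by the subgradient inequality, by at least
`(1/(2γ)) ⟪z - x̄, D (z - x̄)⟫ > 0` for `z ≠ x̄`: so `x̄` is the prox point. -/

open Set Filter
open scoped RealInnerProductSpace ENNReal

noncomputable section

attribute [local instance] Classical.propDecidable

variable {X : Type*} [NormedAddCommGroup X] [InnerProductSpace ℝ X] [FiniteDimensional ℝ X]

/-- `p` is the proximal point `prox^D_{γ g}(u)`, i.e. the minimizer over `dom g` of
`z ↦ (1/(2γ)) ⟪ z - u, D (z - u) ⟫ + g z`. -/
def IsProxPt (γ : ℝ) (D : X →L[ℝ] X) (g : X → ℝ) (s : Set X) (u p : X) : Prop :=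
  p ∈ s ∧ ∀ z ∈ s,
    (1 / (2 * γ)) * ⟪p - u, D (p - u)⟫ + g p ≤
      (1 / (2 * γ)) * ⟪z - u, D (z - u)⟫ + g z

/-- `x` is a stationary point of `F = f + g`, i.e. `0 ∈ ∇f(x) + ∂g(x)`. -/
def IsFBStationary (fgrad : X → X) (g : X → ℝ) (s : Set X) (x : X) : Prop :=
  -fgrad x ∈ SubdiffAt g s x

section

open Topology

omit [FiniteDimensional ℝ X]

lemma LinearMap.IsSymmetric.inner_add_apply_add {D : X →L[ℝ] X}
    (hD : (D : X →ₗ[ℝ] X).IsSymmetric) (a b : X) :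
    ⟪a + b, D (a + b)⟫ = ⟪a, D a⟫ + 2 * ⟪b, D a⟫ + ⟪b, D b⟫ := by
  have hba : ⟪a, D b⟫ = ⟪b, D a⟫ := by rw [← hD.apply_clm, real_inner_comm]
  simp only [map_add, inner_add_left, inner_add_right, hba]
  ring

lemma inner_smul_apply_smul (D : X →L[ℝ] X) (t : ℝ) (w : X) :
    ⟪t • w, D (t • w)⟫ = t ^ 2 * ⟪w, D w⟫ := by
  simp only [map_smul, real_inner_smul_left, real_inner_smul_right]
  ring

def proxObj (γ : ℝ) (D : X →L[ℝ] X) (g : X → ℝ) (u z : X) : ℝ :=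
  (1 / (2 * γ)) * ⟪z - u, D (z - u)⟫ + g z

lemma GE_eq_of_mem {γ : ℝ} {D : X →L[ℝ] X} (hD : (D : X →ₗ[ℝ] X).IsSymmetric)
    (f : X → ℝ) (fgrad : X → X) (g : X → ℝ) {s : Set X} {x z : X}
    (hx : x ∈ closure s) (hz : z ∈ s) :
    GE γ D f fgrad g s x z =
      ((f x + ⟪fgrad x, z - x⟫ + (1 / (2 * γ)) * ⟪z - x, D (z - x)⟫ + g z : ℝ) : EReal) := by
  have hquad := hD.inner_add_apply_add x (z - x)
  rw [add_sub_cancel] at hquad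
  simp only [GE, FE, extE, BregE, phiGD, phiGDgrad, if_pos hz, if_pos hx]
  norm_cast
  rw [hquad]
  simp only [inner_sub_left, real_inner_smul_left, real_inner_comm (D x)]
  ring

lemma mem_of_FBenvE_eq_FE {γ : ℝ} {D : X →L[ℝ] X} {f : X → ℝ} {fgrad : X → X} {g : X → ℝ}
    {s : Set X} {x : X} (hx : x ∈ closure s) (heq : FBenvE γ D f fgrad g s x = FE f g s x) :
    x ∈ s := by
  by_contra hxs
  obtain ⟨y, hy⟩ := closure_nonempty_iff.mp ⟨x, hx⟩
  have hle : FBenvE γ D f fgrad g s x ≤ GE γ D f fgrad g s x y := iInf_le _ y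
  simp only [heq, FE, extE, if_neg hxs, EReal.add_top_of_ne_bot (EReal.coe_ne_bot _), GE, BregE,
    if_pos hy, if_pos hx, top_le_iff] at hle
  norm_cast at hle
  exact EReal.coe_ne_top _ hle

lemma forward_model_nonneg_of_FBenvE_eq_FE {γ : ℝ} {D : X →L[ℝ] X}
    (hD : (D : X →ₗ[ℝ] X).IsSymmetric) {f : X → ℝ} {fgrad : X → X} {g : X → ℝ} {s : Set X}
    {x : X} (hx : x ∈ closure s) (heq : FBenvE γ D f fgrad g s x = FE f g s x) :
    ∀ z ∈ s, 0 ≤ ⟪fgrad x, z - x⟫ + (1 / (2 * γ)) * ⟪z - x, D (z - x)⟫ + (g z - g x) := by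
  intro z hz
  have hle : FBenvE γ D f fgrad g s x ≤ GE γ D f fgrad g s x z := iInf_le _ z
  rw [heq, GE_eq_of_mem hD f fgrad g hx hz] at hle
  simp only [FE, extE, if_pos (mem_of_FBenvE_eq_FE hx heq)] at hle
  norm_cast at hle
  linarith

lemma neg_mem_subdiffAt_of_forall_nonneg {g : X → ℝ} {s : Set X} (hg : ConvexOn ℝ s g)
    {x v : X} (hx : x ∈ s) (D : X →L[ℝ] X) (c : ℝ)
    (h : ∀ z ∈ s, 0 ≤ ⟪v, z - x⟫ + c * ⟪z - x, D (z - x)⟫ + (g z - g x)) :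
    -v ∈ SubdiffAt g s x := by
  refine ⟨hx, fun z hz => ?_⟩
  set A := ⟪v, z - x⟫ + (g z - g x)
  set K := c * ⟪z - x, D (z - x)⟫
  have hsmall : ∀ t ∈ Ioo (0 : ℝ) 1, 0 ≤ A + t * K := by
    rintro t ⟨ht0, ht1⟩
    have hseg : (1 - t) • x + t • z = x + t • (z - x) := by module
    have hzt : x + t • (z - x) ∈ s := by
      rw [← hseg]; exact hg.1 hx hz (by linarith) ht0.le (by ring)
    have hgt : g (x + t • (z - x)) ≤ (1 - t) * g x + t * g z := by
      have := hg.2 hx hz (show 0 ≤ 1 - t by linarith) ht0.le (sub_add_cancel 1 t)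
      rwa [hseg, smul_eq_mul, smul_eq_mul] at this
    have hzt' := h _ hzt
    rw [add_sub_cancel_left, inner_smul_right, inner_smul_apply_smul] at hzt'
    have : 0 ≤ t * (A + t * K) := by nlinarith
    exact (mul_nonneg_iff_of_pos_left ht0).mp this
  have hlim : Tendsto (fun t : ℝ => A + t * K) (𝓝[>] 0) (𝓝 A) :=
    ((continuous_const.add (continuous_id.mul continuous_const)).tendsto' 0 A
      (by simp [A])).mono_left nhdsWithin_le_nhds
  have hA : 0 ≤ A := ge_of_tendsto hlim (eventually_of_mem (Ioo_mem_nhdsGT one_pos) hsmall)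
  rw [inner_neg_left]
  linarith

lemma proxObj_sub_proxObj_forward {γ : ℝ} (hγ : γ ≠ 0) {D : X →L[ℝ] X}
    (hD : (D : X →ₗ[ℝ] X).IsSymmetric) (g : X → ℝ) (x w z : X) :
    proxObj γ D g (x - γ • w) z - proxObj γ D g (x - γ • w) x =
      ⟪D w, z - x⟫ + (1 / (2 * γ)) * ⟪z - x, D (z - x)⟫ + (g z - g x) := by
  have hquad := hD.inner_add_apply_add (γ • w) (z - x)
  rw [show γ • w + (z - x) = z - (x - γ • w) by abel] at hquad
  rw [proxObj, proxObj, hquad, sub_sub_cancel]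
  simp only [map_smul, real_inner_smul_right, real_inner_comm (D w)]
  field_simp
  ring

lemma eq_of_isProxPt_forward {γ : ℝ} (hγ : 0 < γ) {D : X →L[ℝ] X}
    (hD : (D : X →ₗ[ℝ] X).IsSymmetric) (hDpd : ∀ u : X, u ≠ 0 → 0 < ⟪u, D u⟫)
    {g : X → ℝ} {s : Set X} {x v w p : X} (hw : D w = v) (hv : -v ∈ SubdiffAt g s x)
    (hp : IsProxPt γ D g s (x - γ • w) p) : p = x := by
  by_contra hne
  have hpos : 0 < (1 / (2 * γ)) * ⟪p - x, D (p - x)⟫ :=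
    mul_pos (by positivity) (hDpd _ (sub_ne_zero.2 hne))
  have hid := proxObj_sub_proxObj_forward hγ.ne' hD g x w p
  have hmin : proxObj γ D g (x - γ • w) p ≤ proxObj γ D g (x - γ • w) x := hp.2 x hv.1
  have hsub := hv.2 p hp.1
  rw [inner_neg_left, ← hw] at hsub
  linarith

end

theorem fbe_eq_implies_stationary_general
    (f g : X → ℝ) (domg : Set X) (fgrad : X → X)
    (hgconv : ConvexOn ℝ domg g)
    (γ : ℝ) (hγ : 0 < γ) (D : X →L[ℝ] X)
    (hDsa : ∀ u v : X, ⟪D u, v⟫ = ⟪u, D v⟫)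
    (hDpd : ∀ u : X, u ≠ 0 → 0 < ⟪u, D u⟫)
    (Dinv : X →L[ℝ] X) (hDinv : ∀ u : X, Dinv (D u) = u ∧ D (Dinv u) = u)
    (proxD : X → X) (hproxD : ∀ u : X, IsProxPt γ D g domg u (proxD u))
    (xb : X) (hxb : xb ∈ closure domg)
    (heq : FBenvE γ D f fgrad g domg xb = FE f g domg xb) :
    proxD (xb - γ • Dinv (fgrad xb)) = xb ∧ xb ∈ domg ∧ IsFBStationary fgrad g domg xb := by
  have hxdom : xb ∈ domg := mem_of_FBenvE_eq_FE hxb heq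
  have hstat : IsFBStationary fgrad g domg xb :=
    neg_mem_subdiffAt_of_forall_nonneg hgconv hxdom D (1 / (2 * γ))
      (forward_model_nonneg_of_FBenvE_eq_FE hDsa hxb heq)
  exact ⟨eq_of_isProxPt_forward hγ hDsa hDpd (hDinv _).2 hstat (hproxD _), hxdom, hstat⟩

/-- if `F_{γ,D}(x̄) = F(x̄)` and `x̄ ∈ cl (dom g)`, then `x̄` is a fixed point
of the prox-gradient mapping, hence a stationary point of `F`. -/
theorem fbe_eq_implies_stationary
    (f g : X → ℝ) (domg O : Set X) (fgrad : X → X)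
    (hdom : domg.Nonempty) (hO : IsOpen O) (hclO : closure domg ⊆ O)
    (hgconv : ConvexOn ℝ domg g) (hgcont : ContinuousOn g domg)
    (hglsc : LowerSemicontinuous (extE g domg))
    (hflsc : LowerSemicontinuous f)
    (hfC2 : ContDiffOn ℝ 2 f O)
    (hfgrad : ∀ z ∈ O, HasGradientAt f (fgrad z) z)
    (hFlb : ∃ c : ℝ, ∀ z ∈ domg, c ≤ f z + g z)
    (γ : ℝ) (hγ : 0 < γ) (D : X →L[ℝ] X)
    (hDsa : ∀ u v : X, ⟪D u, v⟫ = ⟪u, D v⟫)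
    (hDpd : ∀ u : X, u ≠ 0 → 0 < ⟪u, D u⟫)
    (Dinv : X →L[ℝ] X) (hDinv : ∀ u : X, Dinv (D u) = u ∧ D (Dinv u) = u)
    (proxD : X → X) (hproxD : ∀ u : X, IsProxPt γ D g domg u (proxD u))
    (xb : X) (hxb : xb ∈ closure domg)
    (heq : FBenvE γ D f fgrad g domg xb = FE f g domg xb) :
    proxD (xb - γ • Dinv (fgrad xb)) = xb ∧ xb ∈ domg ∧ IsFBStationary fgrad g domg xb :=
  fbe_eq_implies_stationary_general f g domg fgrad hgconv γ hγ D hDsa hDpd Dinv hDinv proxD hproxD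
    xb hxb heq
end
end

section
/- Suppose g is prox-bounded with threshold λ_g ∈ (0, ∞]. Then for every η̲ > 0, every self-adjoint linear operator 𝒟 on 𝕏 with 𝒟 ⪰ η̲I, and every γ ∈ (0, η̲λ_g), the function G_{γ,𝒟} is level-bounded in y locally uniformly in x: for every x̂ ∈ 𝕏 and every μ ∈ ℝ there exist a neighborhood V of x̂ and a bounded set B ⊆ 𝕏 such that {y ∈ 𝕏 : G_{γ,𝒟}(x,y) ≤ μ} ⊆ B for every x ∈ V. -/
open Set Filter
open scoped RealInnerProductSpace ENNReal

noncomputable section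

attribute [local instance] Classical.propDecidable

variable {X : Type*} [NormedAddCommGroup X] [InnerProductSpace ℝ X] [FiniteDimensional ℝ X]

/-! The term `f y` cancels in `G_{γ,D}(x, y)`, which is `g y + (1/(2γ)) ⟪y, D y⟫` minus an affine
function of `y` whose coefficients `φ(x) - ⟪∇φ(x), x⟫` and `∇φ(x)` are continuous in `x`, hence
bounded near `x̂`. Prox-boundedness with some `λ ∈ (γ/η, λ_g)` bounds `g y` below by
`c - ‖y‖²/(2λ)`, so `D ⪰ ηI` leaves the positive coefficient `η/(2γ) - 1/(2λ)` in front of `‖y‖²`,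
and a positive quadratic dominated by an affine function of `‖y‖` confines `‖y‖`. -/

theorem exists_lt_ofReal_lt {a : ℝ} {b : ℝ≥0∞} (ha : 0 ≤ a) (hab : ENNReal.ofReal a < b) :
    ∃ r : ℝ, a < r ∧ ENNReal.ofReal r < b := by
  obtain ⟨r, -, har, hrb⟩ := ENNReal.lt_iff_exists_real_btwn.1 hab
  exact ⟨r, (ENNReal.ofReal_lt_ofReal_iff_of_nonneg ha).1 har, hrb⟩

theorem isBounded_setOf_sq_norm_le {E : Type*} [SeminormedAddCommGroup E] {e : ℝ} (he : 0 < e)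
    (A B : ℝ) : Bornology.IsBounded {y : E | e * ‖y‖ ^ 2 ≤ A + B * ‖y‖} := by
  refine (Metric.isBounded_closedBall (x := (0 : E)) (r := max 1 ((|A| + |B|) / e))).subset ?_
  intro y (hy : e * ‖y‖ ^ 2 ≤ A + B * ‖y‖)
  rw [mem_closedBall_zero_iff]
  rcases le_or_gt ‖y‖ 1 with h1 | h1
  · exact h1.trans (le_max_left _ _)
  · refine le_max_of_le_right ((le_div_iff₀ he).2 ?_)
    nlinarith [le_abs_self A, le_abs_self B, abs_nonneg A, abs_nonneg B]

section
variable {E : Type*} [NormedAddCommGroup E] [InnerProductSpace ℝ E]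

theorem GE_le_coe_iff {γ : ℝ} {D : E →L[ℝ] E} {f g : E → ℝ} {fgrad : E → E} {s : Set E}
    {x y : E} {μ : ℝ} :
    GE γ D f fgrad g s x y ≤ μ ↔ x ∈ closure s ∧ y ∈ s ∧
      g y + 1 / (2 * γ) * ⟪y, D y⟫ - phiGD γ D f x - ⟪phiGDgrad γ D fgrad x, y - x⟫ ≤ μ := by
  unfold GE FE BregE extE
  split_ifs with hy hx
  · norm_cast
    simp only [hx, hy, true_and, phiGD]
    constructor <;> intro h <;> linarith
  · simp [hx]
  · rw [EReal.coe_add_top, EReal.top_add_coe]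
    simp [hy]
  · simp [hy]

theorem ContDiffOn.continuousOn_of_hasGradientAt [CompleteSpace E] {f : E → ℝ} {fgrad : E → E}
    {O : Set E} {n : WithTop ℕ∞} (hf : ContDiffOn ℝ n f O) (hO : IsOpen O) (hn : 1 ≤ n)
    (hgrad : ∀ z ∈ O, HasGradientAt f (fgrad z) z) : ContinuousOn fgrad O := by
  refine ((InnerProductSpace.toDual ℝ E).symm.continuous.comp_continuousOn
    (hf.continuousOn_fderiv_of_isOpen hO hn)).congr fun z hz => ?_
  rw [Function.comp_apply, (hasGradientAt_iff_hasFDerivAt.1 (hgrad z hz)).fderiv,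
    LinearIsometryEquiv.symm_apply_apply]

variable {γ : ℝ} {D : E →L[ℝ] E}

theorem ContinuousOn.phiGD {f : E → ℝ} {O : Set E} (hf : ContinuousOn f O) :
    ContinuousOn (phiGD γ D f) O := by
  unfold _root_.phiGD
  fun_prop

theorem ContinuousOn.phiGDgrad {fgrad : E → E} {O : Set E} (hf : ContinuousOn fgrad O) :
    ContinuousOn (phiGDgrad γ D fgrad) O := by
  unfold _root_.phiGDgrad
  fun_prop

theorem setOf_GE_le_subset {f g : E → ℝ} {fgrad : E → E} {s V : Set E} {η lam c P μ : ℝ}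
    (hγ : 0 < γ) (hc : ∀ z ∈ s, c ≤ g z + 1 / (2 * lam) * ‖z‖ ^ 2)
    (hD : ∀ u, η * ‖u‖ ^ 2 ≤ ⟪u, D u⟫)
    (hP : ∀ x ∈ V ∩ closure s, |phiGD γ D f x - ⟪phiGDgrad γ D fgrad x, x⟫| ≤ P ∧
      ‖phiGDgrad γ D fgrad x‖ ≤ P) :
    ∀ x ∈ V, {y | GE γ D f fgrad g s x y ≤ μ} ⊆
      {y | (η / (2 * γ) - 1 / (2 * lam)) * ‖y‖ ^ 2 ≤ μ - c + P + P * ‖y‖} := by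
  intro x hx y hy
  obtain ⟨hxs, hys, hle⟩ := GE_le_coe_iff.1 hy
  obtain ⟨hψ, hgrad⟩ := hP x ⟨hx, hxs⟩
  have hCS : ⟪phiGDgrad γ D fgrad x, y⟫ ≤ P * ‖y‖ :=
    (real_inner_le_norm _ _).trans (mul_le_mul_of_nonneg_right hgrad (norm_nonneg y))
  have hquad : η / (2 * γ) * ‖y‖ ^ 2 ≤ 1 / (2 * γ) * ⟪y, D y⟫ := by
    rw [div_mul_eq_mul_div, one_div_mul_eq_div]
    exact div_le_div_of_nonneg_right (hD y) (by positivity)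
  rw [inner_sub_right] at hle
  rw [mem_ofPred_eq]
  linarith [hc y hys, (abs_le.1 hψ).2]

end

theorem exists_bound_phiGD_of_isCompact {γ : ℝ} {D : X →L[ℝ] X} {f : X → ℝ} {fgrad : X → X}
    {K O : Set X} {n : WithTop ℕ∞} (hK : IsCompact K) (hKO : K ⊆ O) (hO : IsOpen O)
    (hf : ContDiffOn ℝ n f O) (hn : 1 ≤ n) (hgrad : ∀ z ∈ O, HasGradientAt f (fgrad z) z) :
    ∃ P : ℝ, ∀ x ∈ K, |phiGD γ D f x - ⟪phiGDgrad γ D fgrad x, x⟫| ≤ P ∧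
      ‖phiGDgrad γ D fgrad x‖ ≤ P := by
  have hφ : ContinuousOn (phiGD γ D f) K := hf.continuousOn.phiGD.mono hKO
  have hdφ : ContinuousOn (phiGDgrad γ D fgrad) K :=
    ((hf.continuousOn_of_hasGradientAt hO hn hgrad).phiGDgrad).mono hKO
  obtain ⟨P₁, hP₁⟩ := hK.exists_bound_of_continuousOn (hφ.sub (hdφ.inner continuousOn_id))
  obtain ⟨P₂, hP₂⟩ := hK.exists_bound_of_continuousOn hdφ
  exact ⟨max P₁ P₂, fun x hx => ⟨(hP₁ x hx).trans (le_max_left _ _),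
    (hP₂ x hx).trans (le_max_right _ _)⟩⟩

theorem Ggam_level_bounded_general
    (f g : X → ℝ) (domg O : Set X) (fgrad : X → X)
    (hO : IsOpen O) (hclO : closure domg ⊆ O)
    (hfC2 : ContDiffOn ℝ 2 f O)
    (hfgrad : ∀ z ∈ O, HasGradientAt f (fgrad z) z)
    (lamg : ℝ≥0∞)
    (hpb : ∀ lam : ℝ, 0 < lam → ENNReal.ofReal lam < lamg →
      ∃ c : ℝ, ∀ z ∈ domg, c ≤ g z + (1 / (2 * lam)) * ‖z‖ ^ 2)
    (η : ℝ) (hη : 0 < η)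
    (D : X →L[ℝ] X)
    (hDlb : ∀ u : X, η * ‖u‖ ^ 2 ≤ ⟪u, D u⟫)
    (γ : ℝ) (hγ : 0 < γ) (hγlt : ENNReal.ofReal (γ / η) < lamg) :
    ∀ (xhat : X) (μ : ℝ), ∃ V ∈ nhds xhat, ∃ Bset : Set X, Bornology.IsBounded Bset ∧
      ∀ x ∈ V, {yy : X | GE γ D f fgrad g domg x yy ≤ (μ : EReal)} ⊆ Bset := by
  intro xhat μ
  obtain ⟨lam, hγlam, hlamg⟩ := exists_lt_ofReal_lt (div_pos hγ hη).le hγlt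
  have hlam : 0 < lam := (div_pos hγ hη).trans hγlam
  obtain ⟨c, hc⟩ := hpb lam hlam hlamg
  have hcoef : 0 < η / (2 * γ) - 1 / (2 * lam) := by
    rw [sub_pos, div_lt_div_iff₀ (by positivity) (by positivity)]
    nlinarith [(div_lt_iff₀ hη).1 hγlam]
  obtain ⟨P, hP⟩ := exists_bound_phiGD_of_isCompact (γ := γ) (D := D)
    ((isCompact_closedBall xhat 1).inter_right isClosed_closure)
    (inter_subset_right.trans hclO) hO hfC2 (by norm_num) hfgrad
  exact ⟨_, Metric.closedBall_mem_nhds xhat one_pos, _, isBounded_setOf_sq_norm_le hcoef _ _,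
    setOf_GE_le_subset hγ hc hDlb hP⟩

/-- under prox-boundedness of `g`, `G_{γ,D}` is level-bounded in `y`
locally uniformly in `x`. -/
theorem Ggam_level_bounded
    (f g : X → ℝ) (domg O : Set X) (fgrad : X → X)
    (hdom : domg.Nonempty) (hO : IsOpen O) (hclO : closure domg ⊆ O)
    (hgconv : ConvexOn ℝ domg g) (hgcont : ContinuousOn g domg)
    (hglsc : LowerSemicontinuous (extE g domg))
    (hflsc : LowerSemicontinuous f)
    (hfC2 : ContDiffOn ℝ 2 f O)
    (hfgrad : ∀ z ∈ O, HasGradientAt f (fgrad z) z)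
    (hFlb : ∃ c : ℝ, ∀ z ∈ domg, c ≤ f z + g z)
    (lamg : ℝ≥0∞) (hlamg : 0 < lamg)
    (hpb : ∀ lam : ℝ, 0 < lam → ENNReal.ofReal lam < lamg →
      ∃ c : ℝ, ∀ z ∈ domg, c ≤ g z + (1 / (2 * lam)) * ‖z‖ ^ 2)
    (η : ℝ) (hη : 0 < η)
    (D : X →L[ℝ] X)
    (hDsa : ∀ u v : X, ⟪D u, v⟫ = ⟪u, D v⟫)
    (hDlb : ∀ u : X, η * ‖u‖ ^ 2 ≤ ⟪u, D u⟫)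
    (γ : ℝ) (hγ : 0 < γ) (hγlt : ENNReal.ofReal (γ / η) < lamg) :
    ∀ (xhat : X) (μ : ℝ), ∃ V ∈ nhds xhat, ∃ Bset : Set X, Bornology.IsBounded Bset ∧
      ∀ x ∈ V, {yy : X | GE γ D f fgrad g domg x yy ≤ (μ : EReal)} ⊆ Bset :=
  Ggam_level_bounded_general f g domg O fgrad hO hclO hfC2 hfgrad lamg hpb η hη D hDlb γ hγ hγlt
end
end

section
/- Let x̄ ∈ cl(dom g), let ε > 0 be such that the closed ball B(x̄, ε) is contained in 𝒪, and let L > 0 be a Lipschitz constant of ∇f on B(x̄, ε). Suppose g is prox-bounded with threshold λ_g ∈ (0, ∞] and that F has the KL property with exponent θ ∈ [1/2, 1) at x̄, i.e. there exist c > 0, δ > 0, ϖ > 0 such that dist(0, ∇f(x) + ∂g(x)) ≥ c(F(x) − F(x̄))^θ for all x ∈ B(x̄, δ) ∩ dom g with F(x̄) < F(x) < F(x̄) + ϖ. Then for every γ ∈ (0, min{λ_g, 1/L}), the envelope F_γ = F_{γ,I} has the KL property with exponent θ at x̄: there exist c' > 0, δ' > 0, ϖ' > 0 such that ‖∇F_γ(x)‖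 ≥ c'(F_γ(x) − F_γ(x̄))^θ for all x ∈ B(x̄, δ') ∩ cl(dom g) with F_γ(x̄) < F_γ(x) < F_γ(x̄) + ϖ'. -/
open Set Filter
open scoped RealInnerProductSpace ENNReal

noncomputable section

attribute [local instance] Classical.propDecidable

variable {X : Type*} [NormedAddCommGroup X] [InnerProductSpace ℝ X] [FiniteDimensional ℝ X]

/-!
If the proximal gradient step fixes `x̄`, then near `x̄` the envelope at `z` differs from `F` at
the proximal point `p = prox_{γg}(z - γ∇f(z))` by `O(‖p - z‖²)` (descent lemma), and `∇f(p) +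
(z - γ∇f(z) - p)/γ` is a subgradient of `F` at `p` of norm `O(‖p - z‖)`; the KL inequality of `F`
at `p` and `2θ ≥ 1` then bound `(F_γ(z) - F_γ(x̄))^θ` by a multiple of the residual `‖z - p‖`.
Otherwise the residual is bounded away from zero near `x̄` and the inequality is trivial for
values of `F_γ` close to `F_γ(x̄)`. Finally, since `‖∇²f‖ ≤ L < 1/γ`, the gradient of `F_γ`,
`(I - γ∇²f(z))(z - p)/γ`, has norm at least `(1 - γL)/γ · ‖z - p‖`.
-/

open Metric Topology
open scoped NNReal

section KLInequality

variable {α : Type*} [TopologicalSpace α]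

/-- The Kurdyka–Łojasiewicz inequality with exponent `θ` for `F` at `x` relative to `S`, where
`r z` plays the role of `dist(0, ∂F(z))`. -/
def KLIneqAt (F : α → ℝ) (S : Set α) (r : α → ℝ) (x : α) (θ : ℝ) : Prop :=
  ∃ c > (0:ℝ), ∃ ϖ > (0:ℝ), ∀ᶠ z in 𝓝[S] x,
    F x < F z → F z < F x + ϖ → c * (F z - F x) ^ θ ≤ r z

variable {F : α → ℝ} {S : Set α} {r r' : α → ℝ} {x : α} {θ : ℝ}

theorem KLIneqAt.mono {C : ℝ} (h : KLIneqAt F S r x θ) (hC : 0 < C)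
    (hr : ∀ᶠ z in 𝓝[S] x, C * r z ≤ r' z) : KLIneqAt F S r' x θ := by
  obtain ⟨c, hc, ϖ, hϖ, hF⟩ := h
  refine ⟨C * c, mul_pos hC hc, ϖ, hϖ, ?_⟩
  filter_upwards [hF, hr] with z hz hrz h₁ h₂
  calc C * c * (F z - F x) ^ θ = C * (c * (F z - F x) ^ θ) := mul_assoc _ _ _
    _ ≤ C * r z := mul_le_mul_of_nonneg_left (hz h₁ h₂) hC.le
    _ ≤ r' z := hrz

theorem klIneqAt_of_continuousAt (hθ : 0 ≤ θ) (hr : ContinuousAt r x) (hpos : 0 < r x) :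
    KLIneqAt F S r x θ := by
  refine ⟨r x / 2, half_pos hpos, 1, one_pos, ?_⟩
  filter_upwards [nhdsWithin_le_nhds (hr.eventually (lt_mem_nhds (half_lt_self hpos)))]
    with z hz h₁ h₂
  calc r x / 2 * (F z - F x) ^ θ ≤ r x / 2 * 1 :=
        mul_le_mul_of_nonneg_left (Real.rpow_le_one (by linarith) (by linarith) hθ)
          (half_pos hpos).le
    _ ≤ r z := by linarith

end KLInequality

theorem KLIneqAt.exists_closedBall {α : Type*} [PseudoMetricSpace α] {F : α → ℝ} {S : Set α}
    {r : α → ℝ} {x : α} {θ : ℝ} (h : KLIneqAt F S r x θ) :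
    ∃ c > (0:ℝ), ∃ δ > (0:ℝ), ∃ ϖ > (0:ℝ), ∀ z ∈ closedBall x δ ∩ S,
      F x < F z → F z < F x + ϖ → c * (F z - F x) ^ θ ≤ r z := by
  obtain ⟨c, hc, ϖ, hϖ, hF⟩ := h
  obtain ⟨δ, hδ, hball⟩ := Metric.mem_nhdsWithin_iff.1 hF
  exact ⟨c, hc, δ / 2, half_pos hδ, ϖ, hϖ,
    fun z hz => hball ⟨closedBall_subset_ball (half_lt_self hδ) hz.1, hz.2⟩⟩

theorem Real.rpow_le_of_le_add_mul_sq {a A w c K₁ K₂ θ : ℝ} (ha : 0 ≤ a)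
    (haA : a ≤ A + K₂ * w ^ 2) (hA : 0 < A → c * A ^ θ ≤ K₁ * w) (hc : 0 < c) (hK₁ : 0 ≤ K₁)
    (hK₂ : 0 ≤ K₂) (hw₀ : 0 ≤ w) (hw₁ : w ≤ 1) (hθ₁ : 1 / 2 ≤ θ) (hθ₂ : θ ≤ 1) :
    a ^ θ ≤ (K₁ / c + K₂ ^ θ) * w := by
  have hθ : 0 ≤ θ := by linarith
  have hApos : max A 0 ^ θ ≤ K₁ / c * w := by
    rcases lt_or_ge 0 A with hA₀ | hA₀
    · rw [max_eq_left hA₀.le, div_mul_eq_mul_div, le_div_iff₀ hc, mul_comm]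
      exact hA hA₀
    · rw [max_eq_right hA₀, Real.zero_rpow (by linarith)]
      positivity
  have hsq : (K₂ * w ^ 2) ^ θ ≤ K₂ ^ θ * w := by
    rw [Real.mul_rpow hK₂ (by positivity)]
    gcongr
    calc (w ^ 2) ^ θ = w ^ (2 * θ) := by
          rw [← Real.rpow_natCast, ← Real.rpow_mul hw₀]; norm_num
      _ ≤ w ^ (1:ℝ) := Real.rpow_le_rpow_of_exponent_ge' hw₀ hw₁ zero_le_one (by linarith)
      _ = w := Real.rpow_one w
  calc a ^ θ ≤ (max A 0 + K₂ * w ^ 2) ^ θ :=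
        Real.rpow_le_rpow ha (haA.trans (by gcongr; exact le_max_left _ _)) hθ
    _ ≤ max A 0 ^ θ + (K₂ * w ^ 2) ^ θ :=
        Real.rpow_add_le_add_rpow (le_max_right _ _) (by positivity) hθ hθ₂
    _ ≤ (K₁ / c + K₂ ^ θ) * w := by rw [add_mul]; exact add_le_add hApos hsq

section ProxCalculus

variable {E : Type*} [NormedAddCommGroup E] [InnerProductSpace ℝ E]
  {γ : ℝ} {g : E → ℝ} {s : Set E}

theorem inner_sub_nonneg_of_mem_subdiffAt {x x' v v' : E} (hv : v ∈ SubdiffAt g s x)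
    (hv' : v' ∈ SubdiffAt g s x') : 0 ≤ ⟪v - v', x - x'⟫ := by
  have h₁ := hv.2 x' hv'.1
  have h₂ := hv'.2 x hv.1
  have hflip : ⟪v, x' - x⟫ = -⟪v, x - x'⟫ := by rw [← inner_neg_right, neg_sub]
  rw [inner_sub_left]
  linarith

theorem isProxPt_id_iff {u p : E} :
    IsProxPt γ (ContinuousLinearMap.id ℝ E) g s u p ↔ p ∈ s ∧ ∀ z ∈ s,
      1 / (2 * γ) * ‖p - u‖ ^ 2 + g p ≤ 1 / (2 * γ) * ‖z - u‖ ^ 2 + g z := by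
  simp only [IsProxPt, ContinuousLinearMap.id_apply, real_inner_self_eq_norm_sq]

variable {u p : E}

theorem IsProxPt.le_add_sq_of_mem (hγ : 0 < γ) (hg : ConvexOn ℝ s g)
    (hp : IsProxPt γ (ContinuousLinearMap.id ℝ E) g s u p) {y : E} (hy : y ∈ s) {t : ℝ}
    (ht₀ : 0 < t) (ht₁ : t ≤ 1) :
    g p ≤ g y + 1 / γ * ⟪p - u, y - p⟫ + t / (2 * γ) * ‖y - p‖ ^ 2 := by
  rw [isProxPt_id_iff] at hp
  have hopt := hp.2 ((1 - t) • p + t • y) (hg.1 hp.1 hy (by linarith) ht₀.le (by ring))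
  have hconv : g ((1 - t) • p + t • y) ≤ (1 - t) * g p + t * g y :=
    hg.2 hp.1 hy (by linarith) ht₀.le (by ring)
  have hexpand : ‖(1 - t) • p + t • y - u‖ ^ 2
      = ‖p - u‖ ^ 2 + 2 * t * ⟪p - u, y - p⟫ + t ^ 2 * ‖y - p‖ ^ 2 := by
    rw [show (1 - t) • p + t • y - u = (p - u) + t • (y - p) by module, norm_add_sq_real,
      norm_smul, real_inner_smul_right, Real.norm_eq_abs, abs_of_pos ht₀]
    ring
  rw [hexpand] at hopt
  refine le_of_mul_le_mul_left ?_ ht₀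
  have hrhs : t * (g y + 1 / γ * ⟪p - u, y - p⟫ + t / (2 * γ) * ‖y - p‖ ^ 2)
      = t * g y + 1 / (2 * γ) * (2 * t * ⟪p - u, y - p⟫ + t ^ 2 * ‖y - p‖ ^ 2) := by
    field_simp
    ring
  rw [hrhs]
  linarith

theorem IsProxPt.smul_sub_mem_subdiffAt (hγ : 0 < γ) (hg : ConvexOn ℝ s g)
    (hp : IsProxPt γ (ContinuousLinearMap.id ℝ E) g s u p) :
    (1 / γ) • (u - p) ∈ SubdiffAt g s p := by
  refine ⟨(isProxPt_id_iff.1 hp).1, fun y hy => ?_⟩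
  have hlim : Tendsto (fun t : ℝ => g y + 1 / γ * ⟪p - u, y - p⟫ + t / (2 * γ) * ‖y - p‖ ^ 2)
      (𝓝[>] 0) (𝓝 (g y + 1 / γ * ⟪p - u, y - p⟫)) := by
    refine tendsto_nhdsWithin_of_tendsto_nhds ?_
    simpa using ((continuous_id.div_const (2 * γ)).mul continuous_const).const_add
      (g y + 1 / γ * ⟪p - u, y - p⟫) |>.tendsto 0
  have hle := ge_of_tendsto hlim (by
    filter_upwards [Ioo_mem_nhdsGT one_pos] with t ht
    exact hp.le_add_sq_of_mem hγ hg hy ht.1 ht.2.le)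
  have hinner : ⟪(1 / γ) • (u - p), y - p⟫ = -(1 / γ * ⟪p - u, y - p⟫) := by
    rw [real_inner_smul_left, ← neg_sub p u, inner_neg_left]
    ring
  linarith

theorem IsProxPt.dist_le (hγ : 0 < γ) (hg : ConvexOn ℝ s g) {u' p' : E}
    (hp : IsProxPt γ (ContinuousLinearMap.id ℝ E) g s u p)
    (hp' : IsProxPt γ (ContinuousLinearMap.id ℝ E) g s u' p') : dist p p' ≤ dist u u' := by
  have hmono := inner_sub_nonneg_of_mem_subdiffAt (hp.smul_sub_mem_subdiffAt hγ hg)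
    (hp'.smul_sub_mem_subdiffAt hγ hg)
  rw [← smul_sub, real_inner_smul_left] at hmono
  have hkey : ‖p - p'‖ ^ 2 ≤ ⟪u - u', p - p'⟫ := by
    have h := nonneg_of_mul_nonneg_right hmono (one_div_pos.2 hγ)
    rw [show u - p - (u' - p') = (u - u') - (p - p') by abel, inner_sub_left,
      real_inner_self_eq_norm_sq] at h
    linarith
  rw [dist_eq_norm, dist_eq_norm]
  nlinarith [real_inner_le_norm (u - u') (p - p'), norm_nonneg (p - p'), norm_nonneg (u - u')]

theorem lipschitzWith_one_of_isProxPt (hγ : 0 < γ) (hg : ConvexOn ℝ s g) {prox : E → E}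
    (hprox : ∀ u, IsProxPt γ (ContinuousLinearMap.id ℝ E) g s u (prox u)) :
    LipschitzWith 1 prox :=
  LipschitzWith.of_dist_le_mul fun u u' => by simpa using (hprox u).dist_le hγ hg (hprox u')

theorem FBenvE_id_eq (hγ : 0 < γ) {f : E → ℝ} {fgrad : E → E} {x : E} (hx : x ∈ closure s)
    (hp : IsProxPt γ (ContinuousLinearMap.id ℝ E) g s (x - γ • fgrad x) p) :
    FBenvE γ (ContinuousLinearMap.id ℝ E) f fgrad g s x
      = ((f x + g p + ⟪fgrad x, p - x⟫ + 1 / (2 * γ) * ‖p - x‖ ^ 2 : ℝ) : EReal) := by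
  set q : E → ℝ := fun y => f x + g y + ⟪fgrad x, y - x⟫ + 1 / (2 * γ) * ‖y - x‖ ^ 2
  have hbreg : ∀ y, phiGD γ (ContinuousLinearMap.id ℝ E) f y
      - phiGD γ (ContinuousLinearMap.id ℝ E) f x - ⟪phiGDgrad γ (ContinuousLinearMap.id ℝ E) fgrad x, y - x⟫
      = 1 / (2 * γ) * ‖y - x‖ ^ 2 - (f y - f x - ⟪fgrad x, y - x⟫) := by
    intro y
    simp only [phiGD, phiGDgrad, ContinuousLinearMap.id_apply, ← real_inner_self_eq_norm_sq,
      inner_sub_left, inner_sub_right, real_inner_smul_left, real_inner_comm x y]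
    field_simp
    ring
  have hGE : ∀ y, GE γ (ContinuousLinearMap.id ℝ E) f fgrad g s x y
      = if y ∈ s then (q y : EReal) else ⊤ := by
    intro y
    split_ifs with hy
    · rw [GE, FE, extE, BregE, if_pos hy, if_pos hx, ← EReal.coe_add, ← EReal.coe_add,
        EReal.coe_eq_coe_iff, hbreg]
      ring
    · rw [GE, FE, extE, BregE, if_neg hy, if_pos hx, EReal.coe_add_top, EReal.top_add_coe]
  have hmin : ∀ y ∈ s, q p ≤ q y := by
    have hshift : ∀ z, 1 / (2 * γ) * ‖z - (x - γ • fgrad x)‖ ^ 2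
        = 1 / (2 * γ) * ‖z - x‖ ^ 2 + ⟪fgrad x, z - x⟫ + γ / 2 * ‖fgrad x‖ ^ 2 := by
      intro z
      rw [show z - (x - γ • fgrad x) = (z - x) + γ • fgrad x by abel, norm_add_sq_real,
        norm_smul, real_inner_smul_right, Real.norm_eq_abs, abs_of_pos hγ, real_inner_comm]
      field_simp
    intro y hy
    have h := (isProxPt_id_iff.1 hp).2 y hy
    rw [hshift, hshift] at h
    simp only [q]
    linarith
  refine le_antisymm ((iInf_le _ p).trans_eq (by rw [hGE, if_pos (isProxPt_id_iff.1 hp).1]))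
    (le_iInf fun y => ?_)
  rw [hGE]
  split_ifs with hy
  · exact EReal.coe_le_coe_iff.2 (hmin y hy)
  · exact le_top

end ProxCalculus

section Smooth

variable {E : Type*} [NormedAddCommGroup E] [InnerProductSpace ℝ E]

theorem abs_sub_sub_inner_le_of_lipschitzOnWith_s6 [CompleteSpace E] {f : E → ℝ} {fgrad : E → E}
    {s : Set E} {K : ℝ≥0} (hs : Convex ℝ s) (hf : ∀ z ∈ s, HasGradientAt f (fgrad z) z)
    (hK : LipschitzOnWith K fgrad s) {a b : E} (ha : a ∈ s) (hb : b ∈ s) :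
    |f b - f a - ⟪fgrad a, b - a⟫| ≤ K * ‖b - a‖ ^ 2 := by
  have hseg : segment ℝ a b ⊆ s := hs.segment_subset ha hb
  have h := (convex_segment a b).norm_image_sub_le_of_norm_hasFDerivWithin_le'
    (f' := fun z => InnerProductSpace.toDual ℝ E (fgrad z))
    (φ := InnerProductSpace.toDual ℝ E (fgrad a)) (C := K * ‖b - a‖)
    (fun z hz => (hf z (hseg hz)).hasFDerivAt.hasFDerivWithinAt) (fun z hz => by
      rw [← map_sub, LinearIsometryEquiv.norm_map]
      exact (hK.norm_sub_le (hseg hz) ha).trans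
        (by gcongr; exact norm_sub_le_of_mem_segment hz))
    (left_mem_segment ℝ a b) (right_mem_segment ℝ a b)
  simpa [InnerProductSpace.toDual_apply_apply, Real.norm_eq_abs, pow_two, mul_assoc] using h

theorem le_norm_smul_sub_smul_apply {H : E →L[ℝ] E} {γ L : ℝ} (hH : ‖H‖ ≤ L) (hγ : 0 < γ)
    (w : E) : (1 - γ * L) / γ * ‖w‖ ≤ ‖(1 / γ) • (w - γ • H w)‖ := by
  have hHw : ‖γ • H w‖ ≤ γ * L * ‖w‖ := by
    rw [norm_smul, Real.norm_eq_abs, abs_of_pos hγ, mul_assoc]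
    gcongr
    exact H.le_of_opNorm_le hH w
  rw [norm_smul, Real.norm_eq_abs, abs_of_pos (one_div_pos.2 hγ)]
  calc (1 - γ * L) / γ * ‖w‖ = 1 / γ * (‖w‖ - γ * L * ‖w‖) := by field_simp
    _ ≤ 1 / γ * ‖w - γ • H w‖ := by
        gcongr
        linarith [norm_sub_norm_le w (γ • H w)]

end Smooth

theorem klIneqAt_residual_of_prox_eq {E : Type*} [NormedAddCommGroup E] [InnerProductSpace ℝ E]
    [CompleteSpace E] {f g Fenv : E → ℝ} {s : Set E} {fgrad prox : E → E} {xb : E}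
    {γ ε θ : ℝ} {K : ℝ≥0} (hγ : 0 < γ) (hg : ConvexOn ℝ s g)
    (hprox : ∀ u, IsProxPt γ (ContinuousLinearMap.id ℝ E) g s u (prox u))
    (hFenv : ∀ z ∈ closure s,
      (Fenv z : EReal) = FBenvE γ (ContinuousLinearMap.id ℝ E) f fgrad g s z)
    (hε : 0 < ε) (hf : ∀ z ∈ closedBall xb ε, HasGradientAt f (fgrad z) z)
    (hK : LipschitzOnWith K fgrad (closedBall xb ε))
    (hKL : ∃ c > (0:ℝ), ∃ δ > (0:ℝ), ∃ ϖ > (0:ℝ),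
      ∀ z ∈ closedBall xb δ ∩ s,
        f xb + g xb < f z + g z → f z + g z < f xb + g xb + ϖ →
        ∀ v ∈ SubdiffAt g s z, c * (f z + g z - (f xb + g xb)) ^ θ ≤ ‖fgrad z + v‖)
    (hθ₁ : 1 / 2 ≤ θ) (hθ₂ : θ ≤ 1)
    (hcont : ContinuousAt (fun z => prox (z - γ • fgrad z)) xb)
    (hfix : prox (xb - γ • fgrad xb) = xb) :
    KLIneqAt Fenv (closure s) (fun z => ‖z - prox (z - γ • fgrad z)‖) xb θ := by
  obtain ⟨c, hc, δ, hδ, ϖ, hϖ, hKL⟩ := hKL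
  have hxb : xb ∈ s := hfix ▸ (hprox _).1
  have hFxb : Fenv xb = f xb + g xb := by
    have h := (hFenv xb (subset_closure hxb)).trans (FBenvE_id_eq hγ (subset_closure hxb) (hprox _))
    rw [hfix, sub_self, inner_zero_right, norm_zero, EReal.coe_eq_coe_iff] at h
    simpa using h
  have hP : Tendsto (fun z => prox (z - γ • fgrad z)) (𝓝 xb) (𝓝 xb) := by
    simpa only [ContinuousAt, hfix] using hcont
  have hw : Tendsto (fun z => ‖prox (z - γ • fgrad z) - z‖) (𝓝 xb) (𝓝 0) := by
    simpa using (hP.sub tendsto_id).norm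
  have hKw : Tendsto (fun z => K * ‖prox (z - γ • fgrad z) - z‖ ^ 2) (𝓝 xb) (𝓝 0) := by
    simpa using (hw.pow 2).const_mul (K : ℝ)
  set M := (K + 1 / γ) / c + (1 / (2 * γ) + K) ^ θ
  refine ⟨M⁻¹, by positivity, ϖ / 2, half_pos hϖ, ?_⟩
  filter_upwards [nhdsWithin_le_nhds (closedBall_mem_nhds xb hε),
    nhdsWithin_le_nhds (hP (closedBall_mem_nhds xb hε)),
    nhdsWithin_le_nhds (hP (closedBall_mem_nhds xb hδ)),
    nhdsWithin_le_nhds (hw (Iic_mem_nhds one_pos)),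
    nhdsWithin_le_nhds (hKw (Iio_mem_nhds (half_pos hϖ))), self_mem_nhdsWithin]
    with z hzε hpε hpδ hw₁ hwϖ hzs h₁ h₂
  simp only [mem_preimage, mem_Iic, mem_Iio] at hpε hpδ hw₁ hwϖ
  set p := prox (z - γ • fgrad z)
  have henv : Fenv z = f z + g p + ⟪fgrad z, p - z⟫ + 1 / (2 * γ) * ‖p - z‖ ^ 2 := by
    exact_mod_cast (hFenv z hzs).trans (FBenvE_id_eq hγ hzs (hprox _))
  have htaylor := abs_le.1
    (abs_sub_sub_inner_le_of_lipschitzOnWith_s6 (convex_closedBall xb ε) hf hK hzε hpε)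
  have hsq : 0 ≤ 1 / (2 * γ) * ‖p - z‖ ^ 2 := by positivity
  have hslope : ‖fgrad p + (1 / γ) • (z - γ • fgrad z - p)‖ ≤ (K + 1 / γ) * ‖p - z‖ := by
    rw [show fgrad p + (1 / γ) • (z - γ • fgrad z - p) = (fgrad p - fgrad z) + (1 / γ) • (z - p) by
      rw [show z - γ • fgrad z - p = (z - p) - γ • fgrad z by abel, smul_sub, smul_smul,
        one_div, inv_mul_cancel₀ hγ.ne', one_smul]
      abel]
    calc _ ≤ ‖fgrad p - fgrad z‖ + ‖(1 / γ) • (z - p)‖ := norm_add_le _ _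
      _ ≤ K * ‖p - z‖ + 1 / γ * ‖p - z‖ := by
          rw [norm_smul, norm_sub_rev z p, Real.norm_eq_abs, abs_of_pos (one_div_pos.2 hγ)]
          exact add_le_add_left (hK.norm_sub_le hpε hzε) _
      _ = (K + 1 / γ) * ‖p - z‖ := by ring
  have hbound := Real.rpow_le_of_le_add_mul_sq (a := Fenv z - Fenv xb)
    (A := f p + g p - (f xb + g xb)) (K₁ := K + 1 / γ) (K₂ := 1 / (2 * γ) + K)
    (by linarith) (by rw [henv, hFxb]; linarith)
    (fun hA => (hKL p ⟨hpδ, (hprox _).1⟩ (by linarith) (by linarith)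
      _ ((hprox _).smul_sub_mem_subdiffAt hγ hg)).trans hslope)
    hc (by positivity) (by positivity) (norm_nonneg _) hw₁ hθ₁ hθ₂
  rw [norm_sub_rev, inv_mul_le_iff₀ (by positivity)]
  exact hbound

theorem KL_transfer_FBE_id_general
    (f g : X → ℝ) (domg O : Set X) (fgrad : X → X)
    (hgconv : ConvexOn ℝ domg g)
    (hfgrad : ∀ z ∈ O, HasGradientAt f (fgrad z) z)
    (fhess : X → X →L[ℝ] X) (hfhess : ∀ z ∈ O, HasFDerivAt fgrad (fhess z) z)
    (xb : X)
    (ε : ℝ) (hε : 0 < ε) (hball : Metric.closedBall xb ε ⊆ O)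
    (L : ℝ) (hL : 0 < L) (hLipL : LipschitzOnWith (Real.toNNReal L) fgrad (Metric.closedBall xb ε))
    (θ : ℝ) (hθ1 : 1/2 ≤ θ) (hθ2 : θ < 1)
    (hKL : ∃ c > (0:ℝ), ∃ δ > (0:ℝ), ∃ ϖ > (0:ℝ),
      ∀ z ∈ Metric.closedBall xb δ ∩ domg,
        f xb + g xb < f z + g z → f z + g z < f xb + g xb + ϖ →
        ∀ v ∈ SubdiffAt g domg z,
          c * (f z + g z - (f xb + g xb)) ^ θ ≤ ‖fgrad z + v‖)
    (γ : ℝ) (hγ : 0 < γ) (hγ2 : γ < 1 / L)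
    (proxg : X → X)
    (hproxg : ∀ u : X, IsProxPt γ (ContinuousLinearMap.id ℝ X) g domg u (proxg u))
    (Fenv : X → ℝ)
    (hFenv : ∀ z ∈ closure domg,
      (Fenv z : EReal) = FBenvE γ (ContinuousLinearMap.id ℝ X) f fgrad g domg z) :
    ∃ c' > (0:ℝ), ∃ δ' > (0:ℝ), ∃ ϖ' > (0:ℝ),
      ∀ z ∈ Metric.closedBall xb δ' ∩ closure domg,
        Fenv xb < Fenv z → Fenv z < Fenv xb + ϖ' →
        c' * (Fenv z - Fenv xb) ^ θ ≤
          ‖(1/γ) • ((z - proxg (z - γ • fgrad z)) -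
            γ • fhess z (z - proxg (z - γ • fgrad z)))‖ := by
  have hγL : γ * L < 1 := by rwa [lt_div_iff₀ hL] at hγ2
  have hP : ContinuousAt (fun z => proxg (z - γ • fgrad z)) xb :=
    (lipschitzWith_one_of_isProxPt hγ hgconv hproxg).continuous.continuousAt.comp
      (continuousAt_id.sub
        ((hfhess xb (hball (mem_closedBall_self hε.le))).continuousAt.const_smul γ))
  have hres : KLIneqAt Fenv (closure domg) (fun z => ‖z - proxg (z - γ • fgrad z)‖) xb θ := by
    by_cases hfix : proxg (xb - γ • fgrad xb) = xb
    · exact klIneqAt_residual_of_prox_eq hγ hgconv hproxg hFenv hε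
        (fun z hz => hfgrad z (hball hz)) hLipL hKL hθ1 hθ2.le hP hfix
    · exact klIneqAt_of_continuousAt (by linarith) (continuousAt_id.sub hP).norm
        (norm_pos_iff.2 (sub_ne_zero.2 (Ne.symm hfix)))
  have hgrad : ∀ᶠ z in 𝓝[closure domg] xb, (1 - γ * L) / γ * ‖z - proxg (z - γ • fgrad z)‖ ≤
      ‖(1/γ) • ((z - proxg (z - γ • fgrad z)) - γ • fhess z (z - proxg (z - γ • fgrad z)))‖ := by
    filter_upwards [nhdsWithin_le_nhds (ball_mem_nhds xb hε)] with z hz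
    refine le_norm_smul_sub_smul_apply ?_ hγ _
    simpa [hL.le] using (hfhess z (hball (ball_subset_closedBall hz))).le_of_lipschitzOn
      (closedBall_mem_nhds_of_mem hz) hLipL
  exact (hres.mono (div_pos (by linarith) hγ) hgrad).exists_closedBall

/-- the KL property of `F` with exponent `θ ∈ [1/2, 1)` at `x̄` transfers to
the envelope `F_γ = F_{γ,I}`. -/
theorem KL_transfer_FBE_id
    (f g : X → ℝ) (domg O : Set X) (fgrad : X → X)
    (hdom : domg.Nonempty) (hO : IsOpen O) (hclO : closure domg ⊆ O)
    (hgconv : ConvexOn ℝ domg g) (hgcont : ContinuousOn g domg)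
    (hglsc : LowerSemicontinuous (extE g domg))
    (hflsc : LowerSemicontinuous f)
    (hfC2 : ContDiffOn ℝ 2 f O)
    (hfgrad : ∀ z ∈ O, HasGradientAt f (fgrad z) z)
    (hFlb : ∃ c : ℝ, ∀ z ∈ domg, c ≤ f z + g z)
    (fhess : X → X →L[ℝ] X) (hfhess : ∀ z ∈ O, HasFDerivAt fgrad (fhess z) z)
    (hfhessc : ContinuousOn fhess O)
    (xb : X) (hxb : xb ∈ closure domg)
    (ε : ℝ) (hε : 0 < ε) (hball : Metric.closedBall xb ε ⊆ O)
    (L : ℝ) (hL : 0 < L) (hLipL : LipschitzOnWith (Real.toNNReal L) fgrad (Metric.closedBall xb ε))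
    (lamg : ℝ≥0∞) (hlamg : 0 < lamg)
    (hpb : ∀ lam : ℝ, 0 < lam → ENNReal.ofReal lam < lamg →
      ∃ c : ℝ, ∀ z ∈ domg, c ≤ g z + (1 / (2 * lam)) * ‖z‖ ^ 2)
    (θ : ℝ) (hθ1 : 1/2 ≤ θ) (hθ2 : θ < 1)
    (hKL : ∃ c > (0:ℝ), ∃ δ > (0:ℝ), ∃ ϖ > (0:ℝ),
      ∀ z ∈ Metric.closedBall xb δ ∩ domg,
        f xb + g xb < f z + g z → f z + g z < f xb + g xb + ϖ →
        ∀ v ∈ SubdiffAt g domg z,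
          c * (f z + g z - (f xb + g xb)) ^ θ ≤ ‖fgrad z + v‖)
    (γ : ℝ) (hγ : 0 < γ) (hγ1 : ENNReal.ofReal γ < lamg) (hγ2 : γ < 1 / L)
    (proxg : X → X)
    (hproxg : ∀ u : X, IsProxPt γ (ContinuousLinearMap.id ℝ X) g domg u (proxg u))
    (Fenv : X → ℝ)
    (hFenv : ∀ z ∈ closure domg,
      (Fenv z : EReal) = FBenvE γ (ContinuousLinearMap.id ℝ X) f fgrad g domg z) :
    ∃ c' > (0:ℝ), ∃ δ' > (0:ℝ), ∃ ϖ' > (0:ℝ),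
      ∀ z ∈ Metric.closedBall xb δ' ∩ closure domg,
        Fenv xb < Fenv z → Fenv z < Fenv xb + ϖ' →
        c' * (Fenv z - Fenv xb) ^ θ ≤
          ‖(1/γ) • ((z - proxg (z - γ • fgrad z)) -
            γ • fhess z (z - proxg (z - γ • fgrad z)))‖ :=
  KL_transfer_FBE_id_general f g domg O fgrad hgconv hfgrad fhess hfhess xb ε hε hball L hL hLipL θ
    hθ1 hθ2 hKL γ hγ hγ2 proxg hproxg Fenv hFenv
end
end
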